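/- arXiv:2008.01722 — 2 statements merged into one kernel-verified Lean document; each statement's English description precedes it below -/
import Mathlib

section
/- Recursive solver error accumulation: suppose M ⪰ I is symmetric and an oracle A returns, for any input b, a vector v with ‖v − M⁻¹b‖₂ ≤ δ'‖b‖₂ where δ' = δ/(3K) and Kδ ≤ 1. Define v₀ = b and v_k = A(v_{k−1}) for k = 1,…,K. Then ‖v_K − M^{−K}b‖₂ ≤ δ‖b‖₂. -/
/-!
Since `M - 1 ⪰ 0`, `‖x‖² ≤ re ⟪M x, x⟫ ≤ ‖M x‖ ‖x‖`, so `M` is invertible and `M⁻¹` is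
nonexpansive. Writing `eₖ = ‖vₖ - M⁻ᵏ b‖`, one step of the inexact iteration gives
`eₖ₊₁ ≤ ε ‖vₖ‖ + eₖ ≤ ε ‖b‖ + (1 + ε) eₖ`, hence `e_K ≤ ((1 + ε)ᴷ - 1) ‖b‖`; with
`ε = δ / (3K)` this is at most `2Kε ‖b‖ ≤ δ ‖b‖`, because `(1 + ε)ᴷ ≤ exp (Kε) ≤ 1 + 2Kε`
when `Kε ≤ 1`.
-/

open Matrix
open scoped ComplexOrder

namespace Matrix

variable {𝕜 n : Type*} [RCLike 𝕜] [Fintype n] [DecidableEq n] {M : Matrix n n 𝕜}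

theorem norm_le_norm_toEuclideanCLM_apply (hM : (M - 1).PosSemidef) (x : EuclideanSpace 𝕜 n) :
    ‖x‖ ≤ ‖toEuclideanCLM (𝕜 := 𝕜) M x‖ := by
  have hpos : 0 ≤ RCLike.re (inner 𝕜 (toEuclideanCLM (𝕜 := 𝕜) M x) x) - ‖x‖ ^ 2 := by
    have := (isPositive_toEuclideanLin_iff.mpr hM).re_inner_nonneg_left x
    simpa [map_sub, inner_sub_left, ← coe_toEuclideanCLM_eq_toEuclideanLin,
      inner_self_eq_norm_sq] using this
  have := re_inner_le_norm (𝕜 := 𝕜) (toEuclideanCLM (𝕜 := 𝕜) M x) x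
  nlinarith [norm_nonneg x, norm_nonneg (toEuclideanCLM (𝕜 := 𝕜) M x)]

theorem norm_toEuclideanCLM_inv_apply_le (hM : (M - 1).PosSemidef) (x : EuclideanSpace 𝕜 n) :
    ‖toEuclideanCLM (𝕜 := 𝕜) M⁻¹ x‖ ≤ ‖x‖ := by
  have hunit : IsUnit M := by
    simpa using (PosDef.posSemidef_add hM PosDef.one).isUnit
  calc ‖toEuclideanCLM (𝕜 := 𝕜) M⁻¹ x‖
      ≤ ‖toEuclideanCLM (𝕜 := 𝕜) M (toEuclideanCLM (𝕜 := 𝕜) M⁻¹ x)‖ :=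
        norm_le_norm_toEuclideanCLM_apply hM _
    _ = ‖x‖ := by
        rw [← mul_apply_eq_comp, ← map_mul,
          mul_nonsing_inv M ((isUnit_iff_isUnit_det M).mp hunit), map_one]
        rfl

end Matrix

theorem one_add_pow_le_one_add_two_mul {ε : ℝ} {n : ℕ} (hε : 0 ≤ ε) (hnε : n * ε ≤ 1) :
    (1 + ε) ^ n ≤ 1 + 2 * (n * ε) := by
  have hexp : Real.exp (n * ε) ≤ 1 + n * ε + (n * ε) ^ 2 := by
    have hx : |(n : ℝ) * ε| ≤ 1 := abs_le.mpr ⟨by linarith [mul_nonneg n.cast_nonneg hε], hnε⟩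
    linarith [(abs_le.mp (Real.abs_exp_sub_one_sub_id_le hx)).2]
  calc (1 + ε) ^ n ≤ Real.exp ε ^ n := by
        gcongr
        linarith [Real.add_one_le_exp ε]
    _ = Real.exp (n * ε) := (Real.exp_nat_mul ε n).symm
    _ ≤ 1 + 2 * (n * ε) := by nlinarith [mul_nonneg (Nat.cast_nonneg n) hε]

section InexactIteration

variable {𝕜 E : Type*} [NormedField 𝕜] [SeminormedAddCommGroup E] [NormedSpace 𝕜 E]
  {T : E →L[𝕜] E}

theorem ContinuousLinearMap.norm_pow_apply_le (hT : ∀ x, ‖T x‖ ≤ ‖x‖) (k : ℕ) (x : E) :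
    ‖(T ^ k) x‖ ≤ ‖x‖ := by
  induction k with
  | zero => rfl
  | succ k ih => rw [pow_succ', mul_apply_eq_comp]; exact (hT _).trans ih

theorem ContinuousLinearMap.norm_sub_pow_apply_le_of_approx_orbit (hT : ∀ x, ‖T x‖ ≤ ‖x‖)
    {ε : ℝ} (hε : 0 ≤ ε) {v : ℕ → E} {n : ℕ}
    (hstep : ∀ k < n, ‖v (k + 1) - T (v k)‖ ≤ ε * ‖v k‖) :
    ‖v n - (T ^ n) (v 0)‖ ≤ ((1 + ε) ^ n - 1) * ‖v 0‖ := by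
  induction n with
  | zero => simp
  | succ n ih =>
    have ih := ih fun k hk ↦ hstep k (hk.trans n.lt_succ_self)
    have hvn : ‖v n‖ ≤ ‖v 0‖ + ‖v n - (T ^ n) (v 0)‖ := by
      have := norm_le_norm_add_norm_sub' (v n) ((T ^ n) (v 0))
      linarith [T.norm_pow_apply_le hT n (v 0)]
    have hsplit : v (n + 1) - (T ^ (n + 1)) (v 0)
        = (v (n + 1) - T (v n)) + T (v n - (T ^ n) (v 0)) := by
      rw [pow_succ', mul_apply_eq_comp, map_sub]; abel
    calc ‖v (n + 1) - (T ^ (n + 1)) (v 0)‖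
        ≤ ε * ‖v n‖ + ‖v n - (T ^ n) (v 0)‖ := by
          rw [hsplit]
          exact (norm_add_le _ _).trans (add_le_add (hstep n n.lt_succ_self) (hT _))
      _ ≤ ε * ‖v 0‖ + (1 + ε) * ‖v n - (T ^ n) (v 0)‖ := by nlinarith
      _ ≤ ε * ‖v 0‖ + (1 + ε) * (((1 + ε) ^ n - 1) * ‖v 0‖) := by gcongr
      _ = ((1 + ε) ^ (n + 1) - 1) * ‖v 0‖ := by ring

end InexactIteration

theorem stmt9_general {d : ℕ} (M : Matrix (Fin d) (Fin d) ℝ)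
    (hM : (M - 1).PosSemidef)
    (K : ℕ) (hK : 0 < K) (δ : ℝ) (hδ : 0 < δ) (hKδ : (K : ℝ) * δ ≤ 1)
    (b : EuclideanSpace ℝ (Fin d)) (v : ℕ → EuclideanSpace ℝ (Fin d)) (hv0 : v 0 = b)
    (hstep : ∀ k < K,
      ‖v (k + 1) - (Matrix.toEuclideanCLM (𝕜 := ℝ) M⁻¹) (v k)‖ ≤ δ / (3 * K) * ‖v k‖) :
    ‖v K - (Matrix.toEuclideanCLM (𝕜 := ℝ) (M⁻¹ ^ K)) b‖ ≤ δ * ‖b‖ := by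
  have hKpos : (0 : ℝ) < K := Nat.cast_pos.mpr hK
  have hKε : K * (δ / (3 * K)) = δ / 3 := by field_simp
  have hδ_le_one : δ ≤ 1 := by nlinarith [(Nat.one_le_cast (α := ℝ)).mpr hK]
  have herr := (toEuclideanCLM (𝕜 := ℝ) M⁻¹).norm_sub_pow_apply_le_of_approx_orbit
    (norm_toEuclideanCLM_inv_apply_le hM) (by positivity) hstep
  have hgrowth := one_add_pow_le_one_add_two_mul (n := K) (by positivity : 0 ≤ δ / (3 * K))
    (by linarith)
  rw [map_pow, ← hv0]
  calc _ ≤ ((1 + δ / (3 * K)) ^ K - 1) * ‖v 0‖ := herr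
    _ ≤ δ * ‖v 0‖ := by gcongr; linarith

/-- Recursive solver error accumulation: if `M ⪰ I`, `Kδ ≤ 1`, `v₀ = b`, and each
step satisfies `‖v_{k+1} − M⁻¹ v_k‖ ≤ (δ/(3K))‖v_k‖`, then
`‖v_K − M^{−K} b‖ ≤ δ‖b‖`. -/
theorem stmt9 {d : ℕ} (M : Matrix (Fin d) (Fin d) ℝ)
    (hM : (M - 1).PosSemidef) (hMpd : M.PosDef)
    (K : ℕ) (hK : 0 < K) (δ : ℝ) (hδ : 0 < δ) (hKδ : (K : ℝ) * δ ≤ 1)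
    (b : EuclideanSpace ℝ (Fin d)) (v : ℕ → EuclideanSpace ℝ (Fin d)) (hv0 : v 0 = b)
    (hstep : ∀ k < K,
      ‖v (k + 1) - (Matrix.toEuclideanCLM (𝕜 := ℝ) M⁻¹) (v k)‖ ≤ δ / (3 * K) * ‖v k‖) :
    ‖v K - (Matrix.toEuclideanCLM (𝕜 := ℝ) (M⁻¹ ^ K)) b‖ ≤ δ * ‖b‖ :=
  stmt9_general M hM K hK δ hδ hKδ b v hv0 hstep
end

section
/- Weighted heteroskedastic risk bound: under b = A·x_true + ξ with E[ξξᵀ] = σ²·diag({‖a_i‖₂²}), for nonnegative diagonal W, the weighted least-squares solution x̃ = (AᵀWA)⁻¹AᵀWb satisfies E[‖x̃ − x_true‖²_{AᵀWA}] ≤ σ²·Tr(AᵀWA), and hence E[‖x̃ − x_true‖₂²] ≤ σ²·τ(W^{1/2}A). -/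
open Matrix BigOperators MeasureTheory

/-! With `S = AᵀWA` and `M = S⁻¹AᵀW`, the error is `x̃ - x = Mξ`, so
`E‖x̃ - x‖²_S = tr(MᵀSM · E[ξξᵀ])`, and only the diagonal of `MᵀSM = W H W`, `H = AS⁻¹Aᵀ`,
enters. Since `HWH = H`, the matrix `W^{1/2} H W^{1/2}` is an orthogonal projection, so
`wᵢ Hᵢᵢ ≤ 1` and the trace is at most `∑ wᵢ σ²‖aᵢ‖² = σ² tr S`. The Euclidean bound follows
from `λ_min(S) ‖e‖² ≤ ‖e‖²_S`. -/

namespace Matrix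

variable {m n : Type*} [Fintype m] [Fintype n]

lemma mulVec_dotProduct_mulVec_mulVec {α : Type*} [CommSemiring α] (M : Matrix m n α)
    (C : Matrix m m α) (u : n → α) :
    M *ᵥ u ⬝ᵥ C *ᵥ (M *ᵥ u) = u ⬝ᵥ (Mᵀ * C * M) *ᵥ u := by
  rw [Matrix.mul_assoc, ← mulVec_mulVec u Mᵀ, dotProduct_mulVec u Mᵀ, vecMul_transpose,
    mulVec_mulVec]

lemma dotProduct_mulVec_self_eq_sum {α : Type*} [CommSemiring α] (Q : Matrix n n α)
    (u : n → α) : u ⬝ᵥ Q *ᵥ u = ∑ i, ∑ j, Q i j * (u j * u i) := by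
  simp only [dotProduct, mulVec, Finset.mul_sum]
  exact Finset.sum_congr rfl fun i _ => Finset.sum_congr rfl fun j _ => by ring

lemma trace_mul_diagonal {α : Type*} [CommSemiring α] [DecidableEq n] (Q : Matrix n n α)
    (v : n → α) : (Q * diagonal v).trace = ∑ i, Q i i * v i := by
  simp [trace, mul_diagonal]

lemma trace_transpose_mul_diagonal_mul {α : Type*} [CommSemiring α] [DecidableEq m]
    (A : Matrix m n α) (w : m → α) :
    (Aᵀ * diagonal w * A).trace = ∑ i, w i * ∑ k, A i k ^ 2 := by
  rw [trace_mul_cycle, trace_mul_diagonal]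
  simp only [mul_apply, transpose_apply, Finset.mul_sum, sq]
  refine Finset.sum_congr rfl fun i _ => ?_
  rw [Finset.sum_mul]
  exact Finset.sum_congr rfl fun k _ => mul_comm _ _

lemma IsHermitian.iInf_eigenvalues_mul_dotProduct_self_le [DecidableEq n] {S : Matrix n n ℝ}
    (hS : S.IsHermitian) (x : n → ℝ) :
    (⨅ i, hS.eigenvalues i) * (x ⬝ᵥ x) ≤ x ⬝ᵥ S *ᵥ x := by
  open MatrixOrder in
  have hle : algebraMap ℝ _ (⨅ i, hS.eigenvalues i) ≤ S := by
    rw [algebraMap_le_iff_le_spectrum hS, hS.spectrum_real_eq_range_eigenvalues]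
    rintro _ ⟨i, rfl⟩
    exact ciInf_le (Set.finite_range _).bddBelow i
  simpa [sub_mulVec, Algebra.algebraMap_eq_smul_one, smul_mulVec, sub_nonneg] using
    (le_iff.mp hle).dotProduct_mulVec_nonneg x

end Matrix

section SecondMoment

variable {Ω ι : Type*} [MeasurableSpace Ω] [Fintype ι]

noncomputable def secondMomentMatrix (μ : Measure Ω) (ξ : Ω → ι → ℝ) : Matrix ι ι ℝ :=
  of fun i j => ∫ ω, ξ ω i * ξ ω j ∂μ

variable {μ : Measure Ω} {ξ : Ω → ι → ℝ}

lemma integrable_dotProduct_mulVec (hint : ∀ i j, Integrable (fun ω => ξ ω i * ξ ω j) μ)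
    (Q : Matrix ι ι ℝ) : Integrable (fun ω => ξ ω ⬝ᵥ Q *ᵥ ξ ω) μ := by
  simp only [dotProduct_mulVec_self_eq_sum]
  exact integrable_finsetSum _ fun i _ => integrable_finsetSum _ fun j _ =>
    (hint j i).const_mul _

lemma integral_dotProduct_mulVec (hint : ∀ i j, Integrable (fun ω => ξ ω i * ξ ω j) μ)
    (Q : Matrix ι ι ℝ) :
    ∫ ω, ξ ω ⬝ᵥ Q *ᵥ ξ ω ∂μ = (Q * secondMomentMatrix μ ξ).trace := by
  calc ∫ ω, ξ ω ⬝ᵥ Q *ᵥ ξ ω ∂μ = ∫ ω, ∑ i, ∑ j, Q i j * (ξ ω j * ξ ω i) ∂μ := by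
        simp only [dotProduct_mulVec_self_eq_sum]
    _ = ∑ i, ∑ j, Q i j * ∫ ω, ξ ω j * ξ ω i ∂μ := by
        rw [integral_finsetSum (f := fun i ω => ∑ j, Q i j * (ξ ω j * ξ ω i)) _
          fun i _ => integrable_finsetSum _ fun j _ => (hint j i).const_mul _]
        refine Finset.sum_congr rfl fun i _ => ?_
        rw [integral_finsetSum _ fun j _ => (hint j i).const_mul _]
        simp only [integral_const_mul]
    _ = (Q * secondMomentMatrix μ ξ).trace := by
        simp only [trace, diag, mul_apply, secondMomentMatrix, of_apply]

end SecondMoment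

section WeightedLeastSquares

variable {m n : Type*} [Fintype n] [DecidableEq n]

lemma transpose_inv_mul_mul_mul_inv_mul {S : Matrix n n ℝ} (hS : Sᵀ = S) (hdet : IsUnit S.det)
    (B : Matrix n m ℝ) : (S⁻¹ * B)ᵀ * S * (S⁻¹ * B) = Bᵀ * S⁻¹ * B := by
  rw [transpose_mul, transpose_nonsing_inv, hS, Matrix.mul_assoc, Matrix.mul_assoc,
    ← Matrix.mul_assoc S, mul_nonsing_inv S hdet, Matrix.one_mul, Matrix.mul_assoc]

variable [Fintype m]

lemma mul_diag_le_one_of_mul_diagonal_mul_self [DecidableEq m] {H : Matrix m m ℝ} {w : m → ℝ}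
    (hw : ∀ i, 0 ≤ w i) (hH : Hᵀ = H) (hP : H * diagonal w * H = H) (i : m) :
    w i * H i i ≤ 1 := by
  have hsum : H i i = ∑ k, w k * H i k ^ 2 := by
    conv_lhs => rw [← hP]
    rw [mul_apply]
    refine Finset.sum_congr rfl fun k _ => ?_
    rw [mul_diagonal, ← congrFun (congrFun hH k) i, transpose_apply]
    ring
  have hnonneg : 0 ≤ H i i :=
    hsum ▸ Finset.sum_nonneg fun k _ => mul_nonneg (hw k) (sq_nonneg _)
  have hle : w i * H i i ^ 2 ≤ H i i := by
    conv_rhs => rw [hsum]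
    exact Finset.single_le_sum (fun k _ => mul_nonneg (hw k) (sq_nonneg _)) (Finset.mem_univ i)
  rcases hnonneg.eq_or_lt with h | h
  · simp [← h]
  · exact le_of_mul_le_mul_right (by linarith) h

variable (A : Matrix m n ℝ) (D : Matrix m m ℝ)

lemma hat_mul_mul_hat (hdet : IsUnit (Aᵀ * D * A).det) :
    A * (Aᵀ * D * A)⁻¹ * Aᵀ * D * (A * (Aᵀ * D * A)⁻¹ * Aᵀ) = A * (Aᵀ * D * A)⁻¹ * Aᵀ := by
  calc A * (Aᵀ * D * A)⁻¹ * Aᵀ * D * (A * (Aᵀ * D * A)⁻¹ * Aᵀ)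
      = A * ((Aᵀ * D * A)⁻¹ * (Aᵀ * D * A)) * (Aᵀ * D * A)⁻¹ * Aᵀ := by
        simp only [Matrix.mul_assoc]
    _ = A * (Aᵀ * D * A)⁻¹ * Aᵀ := by rw [nonsing_inv_mul _ hdet, Matrix.mul_one]

lemma nonsing_inv_mulVec_mulVec_add_sub (hdet : IsUnit (Aᵀ * D * A).det) (x : n → ℝ)
    (ξ : m → ℝ) :
    (Aᵀ * D * A)⁻¹ *ᵥ ((Aᵀ * D) *ᵥ (A *ᵥ x + ξ)) - x = ((Aᵀ * D * A)⁻¹ * (Aᵀ * D)) *ᵥ ξ := by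
  rw [mulVec_add, mulVec_add, mulVec_mulVec x (Aᵀ * D), mulVec_mulVec x (Aᵀ * D * A)⁻¹,
    nonsing_inv_mul _ hdet, one_mulVec, mulVec_mulVec, add_sub_cancel_left]

end WeightedLeastSquares

section Risk

variable {Ω m n : Type*} [MeasurableSpace Ω] [Fintype m] [Fintype n] [DecidableEq m]
  [DecidableEq n]

lemma integral_weightedLeastSquares_risk_le {μ : Measure Ω} {ξ : Ω → m → ℝ}
    {A : Matrix m n ℝ} {w v : m → ℝ} (hw : ∀ i, 0 ≤ w i) (hv : ∀ i, 0 ≤ v i)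
    (hdet : IsUnit (Aᵀ * diagonal w * A).det)
    (hint : ∀ i j, Integrable (fun ω => ξ ω i * ξ ω j) μ)
    (hmoment : secondMomentMatrix μ ξ = diagonal v) :
    ∫ ω, ((Aᵀ * diagonal w * A)⁻¹ * (Aᵀ * diagonal w)) *ᵥ ξ ω ⬝ᵥ (Aᵀ * diagonal w * A) *ᵥ
        (((Aᵀ * diagonal w * A)⁻¹ * (Aᵀ * diagonal w)) *ᵥ ξ ω) ∂μ ≤ ∑ i, w i * v i := by
  set S := Aᵀ * diagonal w * A
  have hSsymm : Sᵀ = S := by simp [S, transpose_mul, Matrix.mul_assoc]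
  have hH : (A * S⁻¹ * Aᵀ)ᵀ = A * S⁻¹ * Aᵀ := by
    rw [transpose_mul, transpose_mul, transpose_transpose, transpose_nonsing_inv, hSsymm,
      Matrix.mul_assoc]
  have hlev := mul_diag_le_one_of_mul_diagonal_mul_self hw hH (hat_mul_mul_hat A _ hdet)
  simp_rw [mulVec_dotProduct_mulVec_mulVec]
  rw [integral_dotProduct_mulVec hint, hmoment, trace_mul_diagonal,
    transpose_inv_mul_mul_mul_inv_mul hSsymm hdet]
  refine Finset.sum_le_sum fun i _ => mul_le_mul_of_nonneg_right ?_ (hv i)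
  have hWHW : (Aᵀ * diagonal w)ᵀ * S⁻¹ * (Aᵀ * diagonal w)
      = diagonal w * (A * S⁻¹ * Aᵀ) * diagonal w := by
    simp only [transpose_mul, diagonal_transpose, transpose_transpose, Matrix.mul_assoc]
  rw [hWHW, mul_diagonal, diagonal_mul]
  simpa using mul_le_mul_of_nonneg_right (hlev i) (hw i)

end Risk

theorem stmt16_general {n d : ℕ} {Ω : Type*} [MeasurableSpace Ω]
    (μ : Measure Ω)
    (A : Matrix (Fin n) (Fin d) ℝ) (w : Fin n → ℝ) (hw : ∀ i, 0 ≤ w i)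
    (hS : (Aᵀ * Matrix.diagonal w * A).PosDef)
    (σ : ℝ) (xtrue : Fin d → ℝ) (ξ : Ω → Fin n → ℝ)
    (hint : ∀ i j, Integrable (fun ω => ξ ω i * ξ ω j) μ)
    (hcov : ∀ i j, (∫ ω, ξ ω i * ξ ω j ∂μ) =
      if i = j then σ ^ 2 * ∑ k, A i k ^ 2 else 0)
    (b : Ω → Fin n → ℝ) (hb : ∀ ω, b ω = A *ᵥ xtrue + ξ ω)
    (xt : Ω → Fin d → ℝ)
    (hx : ∀ ω, xt ω = (Aᵀ * Matrix.diagonal w * A)⁻¹ *ᵥ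
      ((Aᵀ * Matrix.diagonal w) *ᵥ b ω)) :
    (∫ ω, (xt ω - xtrue) ⬝ᵥ ((Aᵀ * Matrix.diagonal w * A) *ᵥ (xt ω - xtrue)) ∂μ) ≤
        σ ^ 2 * (Aᵀ * Matrix.diagonal w * A).trace ∧
      (∫ ω, ∑ i, (xt ω i - xtrue i) ^ 2 ∂μ) ≤
        σ ^ 2 * ((Aᵀ * Matrix.diagonal w * A).trace / (⨅ i, hS.1.eigenvalues i)) := by
  have hdet : IsUnit (Aᵀ * diagonal w * A).det := (isUnit_iff_isUnit_det _).1 hS.isUnit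
  have herr : ∀ ω, xt ω - xtrue = ((Aᵀ * diagonal w * A)⁻¹ * (Aᵀ * diagonal w)) *ᵥ ξ ω :=
    fun ω => by
      rw [hx, hb]
      exact nonsing_inv_mulVec_mulVec_add_sub A _ hdet xtrue (ξ ω)
  have hmoment : secondMomentMatrix μ ξ = diagonal fun i => σ ^ 2 * ∑ k, A i k ^ 2 := by
    ext i j
    simp [secondMomentMatrix, hcov, diagonal_apply]
  have hrisk : ∫ ω, (xt ω - xtrue) ⬝ᵥ (Aᵀ * diagonal w * A) *ᵥ (xt ω - xtrue) ∂μ ≤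
      σ ^ 2 * (Aᵀ * diagonal w * A).trace := by
    rw [trace_transpose_mul_diagonal_mul, Finset.mul_sum]
    simp_rw [herr, mul_left_comm (σ ^ 2) (w _)]
    exact integral_weightedLeastSquares_risk_le hw (fun i => by positivity) hdet hint hmoment
  refine ⟨hrisk, ?_⟩
  -- `⨅` over an empty index is `0`, so `d = 0` is split off; there both sides vanish.
  rcases isEmpty_or_nonempty (Fin d) with hd | hd
  · simp
  obtain ⟨i₀, hi₀⟩ := exists_eq_ciInf_of_finite (f := hS.1.eigenvalues)
  have hmin_pos : 0 < ⨅ i, hS.1.eigenvalues i := hi₀ ▸ hS.eigenvalues_pos i₀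
  have hint_quad : ∀ C, Integrable (fun ω => (xt ω - xtrue) ⬝ᵥ C *ᵥ (xt ω - xtrue)) μ := by
    intro C
    simp_rw [herr, mulVec_dotProduct_mulVec_mulVec]
    exact integrable_dotProduct_mulVec hint _
  have hsq : ∀ ω, ∑ i, (xt ω i - xtrue i) ^ 2 = (xt ω - xtrue) ⬝ᵥ 1 *ᵥ (xt ω - xtrue) := by
    simp [dotProduct, sq]
  rw [← mul_div_assoc, le_div_iff₀' hmin_pos, ← integral_const_mul]
  refine (integral_mono ?_ (hint_quad _) fun ω => ?_).trans hrisk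
  · simp_rw [hsq]
    exact (hint_quad 1).const_mul _
  · rw [hsq, one_mulVec]
    exact hS.1.iInf_eigenvalues_mul_dotProduct_self_le _

/-- Weighted heteroskedastic risk bound: under `b = A x_true + ξ` with
`E[ξξᵀ] = σ²·diag(‖aᵢ‖₂²)` and nonnegative diagonal `W` with `AᵀWA` positive
definite, the weighted least-squares solution `x̃ = (AᵀWA)⁻¹AᵀWb` satisfies
`E[‖x̃ − x_true‖²_{AᵀWA}] ≤ σ²·Tr(AᵀWA)`, hence
`E[‖x̃ − x_true‖₂²] ≤ σ²·τ(W^{1/2}A) = σ²·Tr(AᵀWA)/λ_min(AᵀWA)`. -/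
theorem stmt16 {n d : ℕ} {Ω : Type*} [MeasurableSpace Ω]
    (μ : Measure Ω) [IsProbabilityMeasure μ]
    (A : Matrix (Fin n) (Fin d) ℝ) (w : Fin n → ℝ) (hw : ∀ i, 0 ≤ w i)
    (hS : (Aᵀ * Matrix.diagonal w * A).PosDef)
    (σ : ℝ) (xtrue : Fin d → ℝ) (ξ : Ω → Fin n → ℝ)
    (hint : ∀ i j, Integrable (fun ω => ξ ω i * ξ ω j) μ)
    (hcov : ∀ i j, (∫ ω, ξ ω i * ξ ω j ∂μ) =
      if i = j then σ ^ 2 * ∑ k, A i k ^ 2 else 0)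
    (b : Ω → Fin n → ℝ) (hb : ∀ ω, b ω = A *ᵥ xtrue + ξ ω)
    (xt : Ω → Fin d → ℝ)
    (hx : ∀ ω, xt ω = (Aᵀ * Matrix.diagonal w * A)⁻¹ *ᵥ
      ((Aᵀ * Matrix.diagonal w) *ᵥ b ω)) :
    (∫ ω, (xt ω - xtrue) ⬝ᵥ ((Aᵀ * Matrix.diagonal w * A) *ᵥ (xt ω - xtrue)) ∂μ) ≤
        σ ^ 2 * (Aᵀ * Matrix.diagonal w * A).trace ∧
      (∫ ω, ∑ i, (xt ω i - xtrue i) ^ 2 ∂μ) ≤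
        σ ^ 2 * ((Aᵀ * Matrix.diagonal w * A).trace / (⨅ i, hS.1.eigenvalues i)) :=
  stmt16_general μ A w hw hS σ xtrue ξ hint hcov b hb xt hx
end
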